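/- (Maximal mixedness of block A for partition B₀.) Let t ≥ 1 be an integer, set T = 2t and N = 8T−4, and let J_o, J_e ∈ ℝ. Let |ψ⟩ = (𝒰_e(J_e)·𝒰_o(J_o))^t |Φ_N⟩ and let A = {0,…,2T−1}. Then the reduced density matrix of |ψ⟩ on A is maximally mixed: ρ_A = 2^{−2T}·Id, where Id is the identity matrix indexed by A→{0,1}. -/

import Mathlib

open scoped Matrix Kronecker ComplexConjugate

noncomputable section

/-- The four Pauli matrices: `σ 0 = 1`, `σ 1 = σ_x`, `σ 2 = σ_y`, `σ 3 = σ_z`. -/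
def σ (α : Fin 4) : Matrix (Fin 2) (Fin 2) ℂ :=
  if α = 0 then 1
  else if α = 1 then !![0, 1; 1, 0]
  else if α = 2 then !![0, -Complex.I; Complex.I, 0]
  else !![1, 0; 0, -1]

/-- The Pauli string `P_a = ⊗_j σ_{a(j)}` on `p` qubits. -/
def pauliString (p : ℕ) (a : Fin p → Fin 4) :
    Matrix (Fin p → Fin 2) (Fin p → Fin 2) ℂ :=
  fun s t => ∏ j, σ (a j) (s j) (t j)

/-- The SWAP gate on two qubits: `SWAP|ab⟩ = |ba⟩`. -/
def swapGate : Matrix (Fin 2 × Fin 2) (Fin 2 × Fin 2) ℂ :=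
  fun p q => if p.1 = q.2 ∧ p.2 = q.1 then 1 else 0

/-- The dual-unitary XXZ gate `U(J) = exp(−iJ σ_z⊗σ_z)·SWAP`. -/
def gate (J : ℝ) : Matrix (Fin 2 × Fin 2) (Fin 2 × Fin 2) ℂ :=
  NormedSpace.exp ((-(Complex.I * (J:ℂ))) • (σ 3 ⊗ₖ σ 3)) * swapGate

/-- The even layer `𝒰_e(J)` on `2m` qubits: `U(J)` applied to pairs `(2j, 2j+1)`. -/
def evenLayer (m : ℕ) (J : ℝ) :
    Matrix (Fin (2*m) → Fin 2) (Fin (2*m) → Fin 2) ℂ :=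
  fun s t => ∏ j : Fin m,
    gate J
      (s ⟨2*j.val, by have := j.isLt; omega⟩, s ⟨2*j.val+1, by have := j.isLt; omega⟩)
      (t ⟨2*j.val, by have := j.isLt; omega⟩, t ⟨2*j.val+1, by have := j.isLt; omega⟩)

/-- The odd layer `𝒰_o(J)` on `2m` qubits with periodic boundary conditions:
`U(J)` applied to the pairs `(2j+1, 2j+2 mod 2m)`. -/
def oddLayer (m : ℕ) (J : ℝ) :
    Matrix (Fin (2*m) → Fin 2) (Fin (2*m) → Fin 2) ℂ :=
  fun s t => ∏ j : Fin m,
    gate J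
      (s ⟨(2*j.val+1) % (2*m), Nat.mod_lt _ (by have := j.isLt; omega)⟩,
       s ⟨(2*j.val+2) % (2*m), Nat.mod_lt _ (by have := j.isLt; omega)⟩)
      (t ⟨(2*j.val+1) % (2*m), Nat.mod_lt _ (by have := j.isLt; omega)⟩,
       t ⟨(2*j.val+2) % (2*m), Nat.mod_lt _ (by have := j.isLt; omega)⟩)

/-- The product of Bell pairs `|φ⁺⟩^{⊗m}` on `2m` qubits, `|φ⁺⟩ = (|00⟩+|11⟩)/√2`
on the pairs `(2j, 2j+1)`. -/
def bellState (m : ℕ) : (Fin (2*m) → Fin 2) → ℂ :=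
  fun s => ∏ j : Fin m,
    if s ⟨2*j.val, by have := j.isLt; omega⟩ = s ⟨2*j.val+1, by have := j.isLt; omega⟩
    then ((Real.sqrt 2 : ℂ))⁻¹ else 0

/-- The time-evolved state `|ψ⟩ = (𝒰_e(J_e)·𝒰_o(J_o))^t |Φ⟩` on `2m` qubits. -/
def psiState (m t : ℕ) (Jo Je : ℝ) : (Fin (2*m) → Fin 2) → ℂ :=
  ((evenLayer m Je * oddLayer m Jo)^t) *ᵥ bellState m

/-- Given an enumeration `ι` of a subset `S` of sites and an enumeration `κ` of its
complement, assemble a full configuration from a configuration `u` on `S` and `w` on `S^c`. -/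
def assemble {N p q : ℕ} (ι : Fin p → Fin N) (κ : Fin q → Fin N)
    (u : Fin p → Fin 2) (w : Fin q → Fin 2) : Fin N → Fin 2 :=
  fun i => if h : ∃ j, ι j = i then u h.choose
           else if h' : ∃ j, κ j = i then w h'.choose else 0

/-- The reduced density matrix `ρ_S` of a pure state `ψ` on the subset `S` of sites
enumerated by `ι` (with complement enumerated by `κ`):
`(ρ_S)_{u,v} = Σ_w ψ(u∪w)·conj(ψ(v∪w))`. -/
def rdm {N p q : ℕ} (ι : Fin p → Fin N) (κ : Fin q → Fin N)
    (ψ : (Fin N → Fin 2) → ℂ) : Matrix (Fin p → Fin 2) (Fin p → Fin 2) ℂ :=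
  fun u v => ∑ w : Fin q → Fin 2, ψ (assemble ι κ u w) * conj (ψ (assemble ι κ v w))

/-- `f_n(J) = cos(2J)^{2n} + sin(2J)^{2n}`. -/
def f (n : ℕ) (J : ℝ) : ℝ := Real.cos (2*J)^(2*n) + Real.sin (2*J)^(2*n)

/-- `g_n(J_o,J_e)`, the end-cap factor in the exact formula for `ζ_n(ρ_AB)`. -/
def g (n : ℕ) (Jo Je : ℝ) : ℝ :=
  (1/2^(2*n)) * ∑ k ∈ Finset.range 5, (Nat.choose 4 k : ℝ) *
    ∑ m ∈ Finset.range 2,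
      (Real.cos (2*Jo+2*Je)^(4-k) * Real.sin (2*Jo+2*Je)^k +
        (-1:ℝ)^m * Real.cos (2*Jo-2*Je)^(4-k) * Real.sin (2*Jo-2*Je)^k)^(2*n)

/-- Enumeration of the region `A∪B` for the partition `B₀` (with `T = 2t`, `N = 8T−4`):
`A = {0,…,2T−1}` followed by `B = {4T−2,…,6T−3}`. -/
def iotaAB (t : ℕ) : Fin (4*(2*t)) → Fin (2*(8*t-2)) :=
  fun j => if h : j.val < 2*(2*t) then ⟨j.val, by have := j.isLt; omega⟩
           else ⟨4*(2*t)-2 + (j.val - 2*(2*t)), by have := j.isLt; omega⟩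

/-- Enumeration of the complement of `A∪B` for the partition `B₀`: the two gaps
`{2T,…,4T−3}` and `{6T−2,…,8T−5}`, each of `2(T−1)` sites. -/
def kappaAB (t : ℕ) : Fin (4*(2*t)-4) → Fin (2*(8*t-2)) :=
  fun j => if h : j.val < 2*(2*t)-2 then ⟨2*(2*t) + j.val, by have := j.isLt; omega⟩
           else ⟨6*(2*t)-2 + (j.val - (2*(2*t)-2)), by have := j.isLt; omega⟩

/-- Enumeration of region `A = {0,…,2T−1}` (with `T = 2t`). -/
def iotaA (t : ℕ) : Fin (2*(2*t)) → Fin (2*(8*t-2)) :=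
  fun j => ⟨j.val, by have := j.isLt; omega⟩

/-- Enumeration of the complement of `A`: the sites `{2T,…,8T−5}`. -/
def kappaA (t : ℕ) : Fin (2*(8*t-2) - 2*(2*t)) → Fin (2*(8*t-2)) :=
  fun j => ⟨2*(2*t) + j.val, by have := j.isLt; omega⟩

/-!
Every gate `U(J)` is a diagonal phase times SWAP, so each layer, and hence the whole circuit, maps a
basis state to a unimodular multiple of a basis state with permuted sites: after `t` periods every
odd site has moved `2t` to the right and every even site `2t` to the left. Thus `ψ` is, up to
phases on basis states, a product of Bell pairs on the sites `(2j - 2t, 2j + 1 + 2t)`, which are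
`4t + 1` apart modulo `N = 16t - 4`; as `A` consists of `4t` consecutive sites, no pair lies
inside `A`. For such a pairing state, each site of `A` is copied to its partner outside `A`, so
`ρ_A` is diagonal, and flipping a site of `A` together with its partner shows that all diagonal
entries are equal.
-/

open Function Finset

section Assemble

variable {N p q : ℕ}

structure IsComplementaryEnumeration (ι : Fin p → Fin N) (κ : Fin q → Fin N) : Prop where
  injective_left : Injective ι
  injective_right : Injective κ
  isCompl : IsCompl (Set.range ι) (Set.range κ)

namespace IsComplementaryEnumeration

variable {ι : Fin p → Fin N} {κ : Fin q → Fin N}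

theorem mem_range_or (h : IsComplementaryEnumeration ι κ) (x : Fin N) :
    x ∈ Set.range ι ∨ x ∈ Set.range κ := by
  have hcover : Set.range ι ∪ Set.range κ = Set.univ := h.isCompl.sup_eq_top
  exact (hcover.symm ▸ Set.mem_univ x : x ∈ Set.range ι ∪ Set.range κ)

theorem assemble_apply_left (h : IsComplementaryEnumeration ι κ) (u : Fin p → Fin 2)
    (w : Fin q → Fin 2) (i : Fin p) : assemble ι κ u w (ι i) = u i := by
  have hex : ∃ j, ι j = ι i := ⟨i, rfl⟩
  simp only [assemble, dif_pos hex, h.injective_left hex.choose_spec]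

theorem assemble_apply_right (h : IsComplementaryEnumeration ι κ) (u : Fin p → Fin 2)
    (w : Fin q → Fin 2) (j : Fin q) : assemble ι κ u w (κ j) = w j := by
  have hnex : ¬ ∃ i, ι i = κ j := fun ⟨i, hi⟩ =>
    Set.disjoint_left.mp h.isCompl.disjoint ⟨i, rfl⟩ ⟨j, hi.symm⟩
  have hex : ∃ j', κ j' = κ j := ⟨j, rfl⟩
  simp only [assemble, dif_neg hnex, dif_pos hex, h.injective_right hex.choose_spec]

theorem assemble_comp (h : IsComplementaryEnumeration ι κ) (s : Fin N → Fin 2) :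
    assemble ι κ (s ∘ ι) (s ∘ κ) = s := by
  funext x
  rcases h.mem_range_or x with ⟨i, rfl⟩ | ⟨j, rfl⟩
  · exact h.assemble_apply_left _ _ i
  · exact h.assemble_apply_right _ _ j

end IsComplementaryEnumeration

end Assemble

section PairingState

variable {N p q : ℕ} {ι : Fin p → Fin N} {κ : Fin q → Fin N} {τ : Fin N → Fin N}

theorem exists_invariant_extension (hι : Injective ι) (hτ : Involutive τ)
    (hτι : ∀ i j, τ (ι i) ≠ ι j) (δ : Fin p → Fin 2) :
    ∃ d : Fin N → Fin 2, d ∘ τ = d ∧ d ∘ ι = δ := by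
  refine ⟨fun x => ∑ i, if x = ι i ∨ x = τ (ι i) then δ i else 0, ?_, ?_⟩
  · funext x
    simp only [comp_apply, hτ.eq_iff, fun i => hτ (ι i), or_comm]
  · funext j
    simp only [comp_apply, hι.eq_iff, fun i => (hτι i j).symm, or_false, sum_ite_eq, mem_univ,
      if_true]

theorem card_invariant_fiber_mul (hι : Injective ι) (hτ : Involutive τ)
    (hτι : ∀ i j, τ (ι i) ≠ ι j) (u : Fin p → Fin 2) :
    #{s : Fin N → Fin 2 | s ∘ τ = s ∧ s ∘ ι = u} * 2 ^ p = #{s : Fin N → Fin 2 | s ∘ τ = s} := by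
  have hconst : ∀ u u' : Fin p → Fin 2, #{s : Fin N → Fin 2 | s ∘ τ = s ∧ s ∘ ι = u} =
      #{s : Fin N → Fin 2 | s ∘ τ = s ∧ s ∘ ι = u'} := by
    intro u u'
    -- translating by an invariant configuration equal to `u' - u` on the range of `ι`
    -- matches the two fibres
    obtain ⟨d, hdτ, hdι⟩ := exists_invariant_extension hι hτ hτι (u' - u)
    refine card_nbij' (· + d) (· - d) ?_ ?_ (fun s _ => add_sub_cancel_right s d)
      (fun s _ => sub_add_cancel s d)
    · intro s hs
      simp only [coe_filter, mem_univ, true_and, Set.mem_ofPred_eq] at hs ⊢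
      rw [Pi.add_comp, Pi.add_comp, hs.1, hs.2, hdτ, hdι, add_sub_cancel]
      exact ⟨rfl, rfl⟩
    · intro s hs
      simp only [coe_filter, mem_univ, true_and, Set.mem_ofPred_eq] at hs ⊢
      rw [Pi.sub_comp, Pi.sub_comp, hs.1, hs.2, hdτ, hdι, sub_sub_cancel]
      exact ⟨rfl, rfl⟩
  symm
  calc #{s : Fin N → Fin 2 | s ∘ τ = s}
      = ∑ u' : Fin p → Fin 2, #{s : Fin N → Fin 2 | s ∘ τ = s ∧ s ∘ ι = u'} := by
        rw [card_eq_sum_card_fiberwise (f := (· ∘ ι)) (t := univ)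
          (fun _ _ => mem_coe.mpr (mem_univ _))]
        simp only [filter_filter]
    _ = _ := by
        simp only [← hconst u, sum_const, card_univ, Fintype.card_fun, Fintype.card_fin,
          smul_eq_mul, mul_comm]

theorem eq_of_assemble_invariant (h : IsComplementaryEnumeration ι κ)
    (hτι : ∀ i j, τ (ι i) ≠ ι j) {u v : Fin p → Fin 2} {w : Fin q → Fin 2}
    (hu : assemble ι κ u w ∘ τ = assemble ι κ u w) (hv : assemble ι κ v w ∘ τ = assemble ι κ v w) :
    u = v := by
  funext i
  obtain ⟨k, hk⟩ : τ (ι i) ∈ Set.range κ :=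
    (h.mem_range_or _).resolve_left fun ⟨j, hj⟩ => hτι i j hj.symm
  calc u i = assemble ι κ u w (τ (ι i)) :=
        ((congrFun hu _).trans (h.assemble_apply_left u w i)).symm
    _ = w k := by rw [← hk, h.assemble_apply_right]
    _ = assemble ι κ v w (τ (ι i)) := by rw [← hk, h.assemble_apply_right]
    _ = v i := (congrFun hv _).trans (h.assemble_apply_left v w i)

theorem card_assemble_invariant (h : IsComplementaryEnumeration ι κ) (u : Fin p → Fin 2) :
    #{w : Fin q → Fin 2 | assemble ι κ u w ∘ τ = assemble ι κ u w} =
      #{s : Fin N → Fin 2 | s ∘ τ = s ∧ s ∘ ι = u} := by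
  refine card_nbij' (assemble ι κ u) (· ∘ κ) ?_ ?_ ?_ ?_
  · intro w hw
    simp only [coe_filter, mem_univ, true_and, Set.mem_ofPred_eq] at hw ⊢
    exact ⟨hw, funext (h.assemble_apply_left u w)⟩
  · intro s hs
    simp only [coe_filter, mem_univ, true_and, Set.mem_ofPred_eq] at hs ⊢
    rw [← hs.2, h.assemble_comp]
    exact hs.1
  · intro w _
    exact funext (h.assemble_apply_right u w)
  · intro s hs
    simp only [coe_filter, mem_univ, true_and, Set.mem_ofPred_eq] at hs
    rw [← hs.2, h.assemble_comp]

theorem rdm_eq_smul_one_of_pairing (h : IsComplementaryEnumeration ι κ) (hτ : Involutive τ)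
    (hτι : ∀ i j, τ (ι i) ≠ ι j) {c : (Fin N → Fin 2) → ℂ} (hc : ∀ s, ‖c s‖ = 1) (r : ℂ) :
    rdm ι κ (fun s => c s * if s ∘ τ = s then r else 0) =
      ((‖r‖ ^ 2 * #{s : Fin N → Fin 2 | s ∘ τ = s} / 2 ^ p : ℝ) : ℂ) • 1 := by
  ext u v
  simp only [rdm, Matrix.smul_apply, Matrix.one_apply, smul_eq_mul]
  by_cases huv : u = v
  · subst huv
    have hterm : ∀ w : Fin q → Fin 2,
        (c (assemble ι κ u w) * if assemble ι κ u w ∘ τ = assemble ι κ u w then r else 0) *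
          conj (c (assemble ι κ u w) * if assemble ι κ u w ∘ τ = assemble ι κ u w then r else 0) =
        if assemble ι κ u w ∘ τ = assemble ι κ u w then (‖r‖ ^ 2 : ℂ) else 0 := by
      intro w
      rw [Complex.mul_conj']
      split_ifs <;> simp [hc]
    have hfiber := card_invariant_fiber_mul h.injective_left hτ hτι u
    rw [sum_congr rfl fun w _ => hterm w, ← sum_filter, sum_const, card_assemble_invariant h u,
      if_pos rfl, mul_one, nsmul_eq_mul, ← hfiber]
    push_cast
    field_simp
  · rw [if_neg huv, mul_zero]
    refine sum_eq_zero fun w _ => ?_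
    by_cases hu : assemble ι κ u w ∘ τ = assemble ι κ u w
    · by_cases hv : assemble ι κ v w ∘ τ = assemble ι κ v w
      · exact absurd (eq_of_assemble_invariant h hτι hu hv) huv
      · simp [hv]
    · simp [hu]

end PairingState

section Conjugation

variable {α β : Type*} (π : α ≃ α) {e : α → α}

theorem Function.Involutive.equiv_conj (he : Involutive e) : Involutive (π ∘ e ∘ π.symm) :=
  fun x => by simp [he _]

theorem comp_equiv_conj_eq_self_iff (s : α → β) : s ∘ (π ∘ e ∘ π.symm) = s ↔ s ∘ π ∘ e = s ∘ π :=
  π.comp_symm_eq s (s ∘ π ∘ e)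

theorem card_equiv_conj_invariant [Fintype α] [DecidableEq α] [Fintype β] [DecidableEq β] :
    #{s : α → β | s ∘ (π ∘ e ∘ π.symm) = s} = #{s : α → β | s ∘ e = s} := by
  refine card_nbij' (· ∘ π) (· ∘ π.symm) ?_ ?_ ?_ ?_
  · intro s hs
    simp only [coe_filter, mem_univ, true_and, Set.mem_ofPred_eq] at hs ⊢
    exact (comp_equiv_conj_eq_self_iff π s).mp hs
  · intro s hs
    simp only [coe_filter, mem_univ, true_and, Set.mem_ofPred_eq] at hs ⊢
    rw [comp_equiv_conj_eq_self_iff]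
    funext x
    simp only [comp_apply, Equiv.symm_apply_apply]
    exact congrFun hs x
  · intro s _
    funext x
    simp
  · intro s _
    funext x
    simp

end Conjugation

def zSign (b : Fin 2) : ℝ := if b = 0 then 1 else -1

def gatePhase (J : ℝ) (x : Fin 2 × Fin 2) : ℂ :=
  Complex.exp ((-(J * zSign x.1 * zSign x.2) : ℝ) * Complex.I)

theorem norm_gatePhase (J : ℝ) (x : Fin 2 × Fin 2) : ‖gatePhase J x‖ = 1 :=
  Complex.norm_exp_ofReal_mul_I _

theorem σ_three_eq_diagonal : σ 3 = Matrix.diagonal fun b => (zSign b : ℂ) := by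
  ext a b
  fin_cases a <;> fin_cases b <;> simp [σ, zSign]

theorem gate_apply (J : ℝ) (x y : Fin 2 × Fin 2) : gate J x y = gatePhase J x * swapGate x y := by
  rw [gate, σ_three_eq_diagonal, Matrix.diagonal_kronecker_diagonal, ← Matrix.diagonal_smul,
    Matrix.exp_diagonal, Matrix.diagonal_mul, Pi.coe_exp, Pi.smul_apply, ← Complex.exp_eq_exp_ℂ,
    gatePhase]
  congr 2
  push_cast
  ring

section PhasedMap

variable {α : Type*} [Fintype α]

def IsPhasedMap (M : Matrix α α ℂ) (P : α → α) : Prop :=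
  ∃ c : α → ℂ, (∀ s, ‖c s‖ = 1) ∧ ∀ v s, (M *ᵥ v) s = c s * v (P s)

namespace IsPhasedMap

variable {M M' : Matrix α α ℂ} {P P' : α → α}

theorem of_apply [DecidableEq α] {c : α → ℂ} (hc : ∀ s, ‖c s‖ = 1)
    (hM : ∀ s r, M s r = c s * if r = P s then 1 else 0) : IsPhasedMap M P :=
  ⟨c, hc, fun v s => by simp [Matrix.mulVec, dotProduct, hM]⟩

theorem one [DecidableEq α] : IsPhasedMap (1 : Matrix α α ℂ) id :=
  ⟨1, fun _ => norm_one, fun v s => by simp⟩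

theorem mul (h : IsPhasedMap M P) (h' : IsPhasedMap M' P') : IsPhasedMap (M * M') (P' ∘ P) := by
  obtain ⟨c, hc, hM⟩ := h
  obtain ⟨c', hc', hM'⟩ := h'
  refine ⟨fun s => c s * c' (P s), fun s => by rw [norm_mul, hc, hc', one_mul], fun v s => ?_⟩
  rw [← Matrix.mulVec_mulVec, hM, hM', mul_assoc]
  rfl

theorem pow [DecidableEq α] (h : IsPhasedMap M P) (n : ℕ) : IsPhasedMap (M ^ n) P^[n] := by
  induction n with
  | zero => exact one
  | succ n ih => rw [pow_succ, iterate_succ']; exact ih.mul h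

end IsPhasedMap

end PhasedMap

theorem precomp_iterate {α β : Type*} (f : α → α) (n : ℕ) :
    (fun s : α → β => s ∘ f)^[n] = fun s => s ∘ f^[n] := by
  induction n with
  | zero => rfl
  | succ n ih => rw [iterate_succ, ih, iterate_succ']; rfl

section Layers

variable {m N : ℕ}

def gateLayer (J : ℝ) (a b : Fin m → Fin N) : Matrix (Fin N → Fin 2) (Fin N → Fin 2) ℂ :=
  fun s r => ∏ j, gate J (s (a j), s (b j)) (r (a j), r (b j))

structure IsPairExchange (a b : Fin m → Fin N) (τ : Fin N → Fin N) : Prop where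
  apply_left : ∀ j, τ (a j) = b j
  apply_right : ∀ j, τ (b j) = a j
  exists_eq : ∀ x, ∃ j, a j = x ∨ b j = x

theorem IsPairExchange.forall_iff {a b : Fin m → Fin N} {τ : Fin N → Fin N}
    (h : IsPairExchange a b τ) {β : Type*} (s r : Fin N → β) :
    (∀ j, s (a j) = r (b j) ∧ s (b j) = r (a j)) ↔ r = s ∘ τ := by
  constructor
  · intro hsr
    funext x
    obtain ⟨j, rfl | rfl⟩ := h.exists_eq x
    · rw [comp_apply, h.apply_left, (hsr j).2]
    · rw [comp_apply, h.apply_right, (hsr j).1]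
  · rintro rfl j
    simp [h.apply_left, h.apply_right]

theorem IsPairExchange.involutive {a b : Fin m → Fin N} {τ : Fin N → Fin N}
    (h : IsPairExchange a b τ) : Involutive τ := fun x => by
  obtain ⟨j, rfl | rfl⟩ := h.exists_eq x
  · rw [h.apply_left, h.apply_right]
  · rw [h.apply_right, h.apply_left]

theorem gateLayer_isPhasedMap {a b : Fin m → Fin N} {τ : Fin N → Fin N}
    (h : IsPairExchange a b τ) (J : ℝ) : IsPhasedMap (gateLayer J a b) (· ∘ τ) := by
  refine IsPhasedMap.of_apply (c := fun s => ∏ j, gatePhase J (s (a j), s (b j)))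
    (fun s => by simp [norm_prod, norm_gatePhase]) fun s r => ?_
  simp only [gateLayer, gate_apply, prod_mul_distrib, swapGate, Fintype.prod_boole,
    h.forall_iff s r]

end Layers

section Sites

variable {m : ℕ}

-- The partner of a site in the even layer, which is also its partner in the Bell pairs.
def bellPartner (i : Fin (2 * m)) : Fin (2 * m) :=
  if h : i.val % 2 = 0 then ⟨i + 1, by have := i.isLt; omega⟩
  else ⟨i - 1, by have := i.isLt; omega⟩

def oddPartner (i : Fin (2 * m)) : Fin (2 * m) :=
  if i.val % 2 = 1 then ⟨(i + 1) % (2 * m), Nat.mod_lt _ (by have := i.isLt; omega)⟩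
  else ⟨(i + (2 * m - 1)) % (2 * m), Nat.mod_lt _ (by have := i.isLt; omega)⟩

theorem mod_two_mul_mod_two (x : ℕ) : x % (2 * m) % 2 = x % 2 :=
  Nat.mod_mod_of_dvd x (dvd_mul_right 2 m)

theorem isPairExchange_bellPartner :
    IsPairExchange (fun j : Fin m => (⟨2 * j, by have := j.isLt; omega⟩ : Fin (2 * m)))
      (fun j => ⟨2 * j + 1, by have := j.isLt; omega⟩) bellPartner where
  apply_left j := by simp [bellPartner]
  apply_right j := by simp [bellPartner]
  exists_eq x := ⟨⟨x / 2, by have := x.isLt; omega⟩, by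
    rcases Nat.mod_two_eq_zero_or_one x with h | h
    · exact Or.inl (Fin.ext (by simp; omega))
    · exact Or.inr (Fin.ext (by simp; omega))⟩

theorem isPairExchange_oddPartner :
    IsPairExchange (fun j : Fin m =>
      (⟨(2 * j + 1) % (2 * m), Nat.mod_lt _ (by have := j.isLt; omega)⟩ : Fin (2 * m)))
      (fun j => ⟨(2 * j + 2) % (2 * m), Nat.mod_lt _ (by have := j.isLt; omega)⟩) oddPartner where
  apply_left j := by
    have hj := j.isLt
    simp only [oddPartner, Nat.mod_eq_of_lt (show 2 * j.val + 1 < 2 * m by omega)]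
    rw [if_pos (by omega)]
  apply_right j := by
    simp only [oddPartner, mod_two_mul_mod_two]
    rw [if_neg (by omega)]
    ext
    simp only [Nat.mod_add_mod]
    rw [show 2 * j.val + 2 + (2 * m - 1) = 2 * j.val + 1 + 2 * m by omega, Nat.add_mod_right]
  exists_eq x := by
    have hx := x.isLt
    rcases Nat.mod_two_eq_zero_or_one x with h | h
    · rcases Nat.eq_zero_or_pos x.val with h0 | h0
      · refine ⟨⟨m - 1, by omega⟩, Or.inr (Fin.ext ?_)⟩
        simp only [show 2 * (m - 1) + 2 = 2 * m by omega, Nat.mod_self, h0]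
      · refine ⟨⟨x / 2 - 1, by omega⟩, Or.inr (Fin.ext ?_)⟩
        simp only [show 2 * (x.val / 2 - 1) + 2 = x by omega, Nat.mod_eq_of_lt hx]
    · refine ⟨⟨x / 2, by omega⟩, Or.inl (Fin.ext ?_)⟩
      simp only [show 2 * (x.val / 2) + 1 = x by omega, Nat.mod_eq_of_lt hx]

theorem evenLayer_isPhasedMap (J : ℝ) : IsPhasedMap (evenLayer m J) (· ∘ bellPartner) :=
  gateLayer_isPhasedMap isPairExchange_bellPartner J

theorem oddLayer_isPhasedMap (J : ℝ) : IsPhasedMap (oddLayer m J) (· ∘ oddPartner) :=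
  gateLayer_isPhasedMap isPairExchange_oddPartner J

theorem bellState_eq (s : Fin (2 * m) → Fin 2) :
    bellState m s = if s ∘ bellPartner = s then ((Real.sqrt 2 : ℂ))⁻¹ ^ m else 0 := by
  have hpairs : (∀ j : Fin m, s ⟨2 * j, by have := j.isLt; omega⟩ =
      s ⟨2 * j + 1, by have := j.isLt; omega⟩) ↔ s ∘ bellPartner = s := by
    rw [eq_comm, ← isPairExchange_bellPartner.forall_iff]
    exact forall_congr' fun j => (and_iff_left_of_imp Eq.symm).symm
  simp only [bellState, Fintype.prod_ite_zero, prod_const, card_univ, Fintype.card_fin, hpairs]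

theorem card_bellPartner_invariant : #{s : Fin (2 * m) → Fin 2 | s ∘ bellPartner = s} = 2 ^ m := by
  rw [show 2 ^ m = #(univ : Finset (Fin m → Fin 2)) by simp]
  refine card_nbij' (fun s j => s ⟨2 * j, by have := j.isLt; omega⟩)
    (fun x i => x ⟨i / 2, by have := i.isLt; omega⟩)
    (fun _ _ => mem_coe.mpr (mem_univ _)) ?_ ?_ ?_
  · intro x _
    simp only [coe_filter, mem_univ, true_and, Set.mem_ofPred_eq]
    funext i
    simp only [comp_apply, bellPartner]
    split <;> exact congrArg x (Fin.ext (by simp; omega))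
  · intro s hs
    simp only [coe_filter, mem_univ, true_and, Set.mem_ofPred_eq] at hs
    funext i
    rcases Nat.mod_two_eq_zero_or_one i with h | h
    · exact congrArg s (Fin.ext (by simp; omega))
    · rw [← congrFun hs i]
      simp only [comp_apply, bellPartner, dif_neg (show ¬ i.val % 2 = 0 by omega)]
      exact congrArg s (Fin.ext (by simp; omega))
  · intro x _
    funext j
    simp

end Sites

section Dynamics

variable {m : ℕ}

-- Under one period `bellPartner ∘ oddPartner` a site moves by `2 * siteSign`.
def siteSign {n : ℕ} (i : Fin n) : ℤ := if i.val % 2 = 0 then -1 else 1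

theorem siteSign_bellPartner (i : Fin (2 * m)) : siteSign (bellPartner i) = -siteSign i := by
  unfold siteSign bellPartner
  split_ifs <;> simp_all <;> omega

theorem cast_bellPartner (i : Fin (2 * m)) :
    ((bellPartner i : ℕ) : ZMod (2 * m)) = i.val - siteSign i := by
  unfold siteSign bellPartner
  split_ifs with h
  · push_cast; ring
  · rw [Fin.val_mk, Nat.cast_sub (by omega)]; push_cast; ring

theorem siteSign_oddPartner (i : Fin (2 * m)) : siteSign (oddPartner i) = -siteSign i := by
  unfold siteSign oddPartner
  split_ifs <;> simp_all only [mod_two_mul_mod_two] <;> omega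

theorem cast_oddPartner (i : Fin (2 * m)) :
    ((oddPartner i : ℕ) : ZMod (2 * m)) = i.val + siteSign i := by
  rcases Nat.mod_two_eq_zero_or_one i with h | h
  · simp only [oddPartner, siteSign, h, zero_ne_one, if_false, if_true, ZMod.natCast_mod]
    rw [Nat.cast_add, Nat.cast_sub (by have := i.isLt; omega), ZMod.natCast_self]
    push_cast
    ring
  · simp only [oddPartner, siteSign, h, one_ne_zero, if_false, if_true, ZMod.natCast_mod]
    push_cast
    ring

theorem siteSign_shift_iterate (n : ℕ) (i : Fin (2 * m)) :
    siteSign ((bellPartner ∘ oddPartner)^[n] i) = siteSign i := by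
  induction n with
  | zero => rfl
  | succ n ih =>
    rw [iterate_succ_apply', comp_apply, siteSign_bellPartner, siteSign_oddPartner, ih, neg_neg]

theorem cast_shift_iterate (n : ℕ) (i : Fin (2 * m)) :
    (((bellPartner ∘ oddPartner)^[n] i : ℕ) : ZMod (2 * m)) = i.val + 2 * n * siteSign i := by
  induction n with
  | zero => simp
  | succ n ih =>
    rw [iterate_succ_apply', comp_apply, cast_bellPartner, cast_oddPartner, siteSign_oddPartner, ih,
      siteSign_shift_iterate]
    push_cast
    ring

end Dynamics

theorem natCast_add_ne_of_lt {N a b d : ℕ} (had : a + d < N) (hbd : b < d) :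
    ((a + d : ℕ) : ZMod N) ≠ b := by
  rw [Ne, ZMod.natCast_eq_natCast_iff', Nat.mod_eq_of_lt had, Nat.mod_eq_of_lt (by omega)]
  omega

theorem cast_shift_iterate_bellPartner {m : ℕ} (n : ℕ) (y : Fin (2 * m)) :
    (((bellPartner ∘ oddPartner)^[n] (bellPartner y) : ℕ) : ZMod (2 * m)) =
      ((bellPartner ∘ oddPartner)^[n] y : ℕ) - (4 * n + 1) * siteSign y := by
  rw [cast_shift_iterate, cast_shift_iterate, cast_bellPartner, siteSign_bellPartner]
  push_cast; ring

theorem le_val_shift_iterate_bellPartner (t : ℕ) (y : Fin (2 * (8 * t - 2)))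
    (hy : ((bellPartner ∘ oddPartner)^[t] y).val < 2 * (2 * t)) :
    2 * (2 * t) ≤ ((bellPartner ∘ oddPartner)^[t] (bellPartner y)).val := by
  set a := ((bellPartner ∘ oddPartner)^[t] y).val
  set b := ((bellPartner ∘ oddPartner)^[t] (bellPartner y)).val
  by_contra! hb
  have hN : 8 * t + 1 ≤ 2 * (8 * t - 2) := by have := y.isLt; omega
  have key := cast_shift_iterate_bellPartner t y
  unfold siteSign at key
  split_ifs at key
  · refine natCast_add_ne_of_lt (N := 2 * (8 * t - 2)) (a := a) (b := b) (d := 4 * t + 1)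
      (by omega) (by omega) ?_
    rw [key]; push_cast; ring
  · refine natCast_add_ne_of_lt (N := 2 * (8 * t - 2)) (a := b) (b := a) (d := 4 * t + 1)
      (by omega) (by omega) ?_
    rw [Nat.cast_add, key]; push_cast; ring

theorem isComplementaryEnumeration_iotaA_kappaA (t : ℕ) :
    IsComplementaryEnumeration (iotaA t) (kappaA t) where
  injective_left i j h := Fin.ext (by simpa [iotaA] using congrArg Fin.val h)
  injective_right i j h := Fin.ext (by simpa [kappaA] using congrArg Fin.val h)
  isCompl := by
    refine ⟨Set.disjoint_left.mpr ?_, codisjoint_iff.mpr (Set.eq_univ_of_forall fun x => ?_)⟩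
    · rintro _ ⟨i, rfl⟩ ⟨j, hj⟩
      have := congrArg Fin.val hj
      simp only [iotaA, kappaA] at this
      omega
    · by_cases hx : x.val < 2 * (2 * t)
      · exact Or.inl ⟨⟨x, hx⟩, rfl⟩
      · exact Or.inr ⟨⟨x - 2 * (2 * t), by omega⟩, Fin.ext (by simp [kappaA]; omega)⟩

def shiftEquiv (m t : ℕ) : Fin (2 * m) ≃ Fin (2 * m) :=
  Equiv.ofBijective ((bellPartner ∘ oddPartner)^[t])
    ((isPairExchange_bellPartner.involutive.bijective.comp
      isPairExchange_oddPartner.involutive.bijective).iterate t)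

theorem shiftEquiv_conj_bellPartner_iotaA_ne (t : ℕ) (i j : Fin (2 * (2 * t))) :
    (shiftEquiv (8 * t - 2) t ∘ bellPartner ∘ (shiftEquiv (8 * t - 2) t).symm) (iotaA t i) ≠
      iotaA t j := by
  intro h
  set y := (shiftEquiv (8 * t - 2) t).symm (iotaA t i)
  have hy : ((bellPartner ∘ oddPartner)^[t] y).val = i.val :=
    congrArg Fin.val ((shiftEquiv (8 * t - 2) t).apply_symm_apply _)
  have hey : ((bellPartner ∘ oddPartner)^[t] (bellPartner y)).val = j.val := congrArg Fin.val h
  have := le_val_shift_iterate_bellPartner t y (by omega)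
  omega

theorem psiState_eq_phase_mul_pairState (m t : ℕ) (Jo Je : ℝ) :
    ∃ c : (Fin (2 * m) → Fin 2) → ℂ, (∀ s, ‖c s‖ = 1) ∧
      psiState m t Jo Je = fun s => c s *
        if s ∘ (shiftEquiv m t ∘ bellPartner ∘ (shiftEquiv m t).symm) = s
        then ((Real.sqrt 2 : ℂ))⁻¹ ^ m else 0 := by
  obtain ⟨c, hc, h⟩ := ((evenLayer_isPhasedMap Je).mul (oddLayer_isPhasedMap Jo)).pow t
  refine ⟨c, hc, funext fun s => ?_⟩
  rw [psiState, h, show (· ∘ oddPartner) ∘ (· ∘ bellPartner) =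
    (· ∘ (bellPartner ∘ oddPartner)) from rfl, precomp_iterate]
  simp only [bellState_eq, comp_equiv_conj_eq_self_iff]
  rfl

theorem norm_inv_sqrt_two_pow_sq (m : ℕ) : ‖((Real.sqrt 2 : ℂ))⁻¹ ^ m‖ ^ 2 = (2 ^ m)⁻¹ := by
  rw [norm_pow, norm_inv, Complex.norm_real, Real.norm_of_nonneg (Real.sqrt_nonneg 2), ← pow_mul,
    mul_comm, pow_mul, inv_pow, Real.sq_sqrt zero_le_two, inv_pow]

theorem blockA_maximally_mixed_general (t : ℕ) (Jo Je : ℝ) :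
    rdm (iotaA t) (kappaA t) (psiState (8*t-2) t Jo Je) =
      ((2:ℂ)^(2*(2*t)))⁻¹ • (1 : Matrix (Fin (2*(2*t)) → Fin 2) (Fin (2*(2*t)) → Fin 2) ℂ) := by
  obtain ⟨c, hc, hψ⟩ := psiState_eq_phase_mul_pairState (8*t-2) t Jo Je
  rw [hψ, rdm_eq_smul_one_of_pairing (isComplementaryEnumeration_iotaA_kappaA t)
    (isPairExchange_bellPartner.involutive.equiv_conj _)
    (shiftEquiv_conj_bellPartner_iotaA_ne t) hc, card_equiv_conj_invariant, card_bellPartner_invariant, norm_inv_sqrt_two_pow_sq]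
  congr 1
  push_cast
  field_simp

/-- Maximal mixedness of block `A` for partition `B₀`: with `T = 2t`, `N = 8T−4`,
`|ψ⟩ = (𝒰_e(J_e)𝒰_o(J_o))^t|Φ_N⟩` and `A = {0,…,2T−1}`, the reduced density
matrix on `A` is `ρ_A = 2^{−2T}·Id`. -/
theorem blockA_maximally_mixed (t : ℕ) (ht : 1 ≤ t) (Jo Je : ℝ) :
    rdm (iotaA t) (kappaA t) (psiState (8*t-2) t Jo Je) =
      ((2:ℂ)^(2*(2*t)))⁻¹ • (1 : Matrix (Fin (2*(2*t)) → Fin 2) (Fin (2*(2*t)) → Fin 2) ℂ) :=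
  blockA_maximally_mixed_general t Jo Je
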